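/- Let (L,*) be a loop with involution and M = D(L,*,γ). Then every commutator of M lies in L; explicitly, [a, bj]·(ab^*) = a^*b^*, [aj, b]·(b^*a^*) = ba^*, and b^*a = (a^*b)·[aj, bj] for all a,b ∈ L. Consequently, all commutators of M are central in L if and only if * is a central involution on L. -/

import Mathlib

/-!
In `M = D(L,*,γ)` the products `yx` and `xy` lie in the same coset `L` or `Lj`, and right
multiplication by elements of `L` acts transitively on each coset, so every commutator lies in
`L`; comparing components (and applying `*`) gives the three formulas. If all commutators are
central, the formula for `[a, j]` reads `a^* = [a, j]·a`, so `*` is central. Conversely, write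
`a^* = z_a a` with `z_a` central. Moving central factors around, each of the four defining
equations of `k = [x, y]` determines `k` from `z_a`, `z_b`, `z_{ab}` by products, left divisions and
`*`, all of which preserve the center; e.g. for `x, y ∈ L`, applying `*` to `ab = (ba)k` gives
`z_{ab}·((ba)k) = (z_b z_a)·(ba)`, whence `z_{ab}·k = z_b z_a`.
-/

universe u

class Loop (L : Type u) extends Mul L, One L where
  ldiv : L → L → L
  rdiv : L → L → L
  mul_ldiv : ∀ a b : L, a * ldiv a b = b
  ldiv_mul : ∀ a b : L, ldiv a (a * b) = b
  rdiv_mul : ∀ a b : L, rdiv b a * a = b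
  mul_rdiv : ∀ a b : L, rdiv (b * a) a = b
  one_mul : ∀ a : L, 1 * a = a
  mul_one : ∀ a : L, a * 1 = a

section Magma
variable {M : Type u} (mul : M → M → M)

/-- Left nucleus of a magma. -/
def leftNucS : Set M := {a | ∀ x y, mul (mul a x) y = mul a (mul x y)}
/-- Middle nucleus of a magma. -/
def midNucS : Set M := {a | ∀ x y, mul (mul x a) y = mul x (mul a y)}
/-- Right nucleus of a magma. -/
def rightNucS : Set M := {a | ∀ x y, mul (mul x y) a = mul x (mul y a)}
/-- Nucleus of a magma. -/
def nucS : Set M := leftNucS mul ∩ midNucS mul ∩ rightNucS mul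
/-- Commutant (commutative center) of a magma. -/
def commutantS : Set M := {a | ∀ x, mul a x = mul x a}
/-- Center of a magma: the commutant intersected with the nucleus. -/
def centerS : Set M := commutantS mul ∩ nucS mul
end Magma

namespace Loop
variable {L : Type u} [Loop L]

/-- The left inverse `a^λ`, satisfying `a^λ * a = 1`. -/
def linv (a : L) : L := Loop.rdiv 1 a
/-- The right inverse `a^ρ`, satisfying `a * a^ρ = 1`. -/
def rinv (a : L) : L := Loop.ldiv a 1
/-- The commutator `[a,b]`, defined by `a*b = (b*a)*[a,b]`. -/
def comm (a b : L) : L := Loop.ldiv (b*a) (a*b)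
/-- The associator `[a,b,c]`, defined by `(a*b)*c = (a*(b*c))*[a,b,c]`. -/
def assoc (a b c : L) : L := Loop.ldiv (a*(b*c)) ((a*b)*c)

end Loop

/-- The nucleus of a loop. -/
abbrev LNuc (L : Type u) [Loop L] : Set L := nucS (fun x y : L => x * y)
/-- The commutant of a loop. -/
abbrev LCommutant (L : Type u) [Loop L] : Set L := commutantS (fun x y : L => x * y)
/-- The center of a loop. -/
abbrev LCenter (L : Type u) [Loop L] : Set L := centerS (fun x y : L => x * y)

/-- Multiplication of the Cayley–Dickson double `D(L,*,γ) = L ∪ Lj`,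
encoded on `L × Bool` with `(a, false) = a` and `(a, true) = a·j`. -/
def CDmul {L : Type u} [Loop L] (star : L → L) (γ : L) :
    L × Bool → L × Bool → L × Bool
  | (a, false), (b, false) => (a * b, false)
  | (a, false), (b, true)  => (b * a, true)
  | (a, true),  (b, false) => (a * star b, true)
  | (a, true),  (b, true)  => (γ * (star b * a), false)

namespace Loop
variable {L : Type u} [Loop L]

theorem mul_left_cancel {a x y : L} (h : a * x = a * y) : x = y := by
  rw [← Loop.ldiv_mul a x, h, Loop.ldiv_mul]

theorem mul_right_cancel {a x y : L} (h : x * a = y * a) : x = y := by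
  rw [← Loop.mul_rdiv a x, h, Loop.mul_rdiv]

end Loop

namespace LCenter
variable {L : Type u} [Loop L] {z : L}

theorem mul_comm (hz : z ∈ LCenter L) (x : L) : z * x = x * z := hz.1 x

theorem left_assoc (hz : z ∈ LCenter L) (x y : L) : z * x * y = z * (x * y) := hz.2.1.1 x y

theorem mid_assoc (hz : z ∈ LCenter L) (x y : L) : x * z * y = x * (z * y) := hz.2.1.2 x y

theorem right_assoc (hz : z ∈ LCenter L) (x y : L) : x * y * z = x * (y * z) := hz.2.2 x y

theorem mul_left_comm (hz : z ∈ LCenter L) (x y : L) : x * (z * y) = z * (x * y) := by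
  rw [← mid_assoc hz, ← mul_comm hz, left_assoc hz]

theorem mem_of_comm (hc : ∀ x, z * x = x * z) (hl : ∀ x y, z * x * y = z * (x * y))
    (hr : ∀ x y, x * y * z = x * (y * z)) : z ∈ LCenter L := by
  refine ⟨hc, ⟨hl, fun x y => ?_⟩, hr⟩
  show x * z * y = x * (z * y)
  rw [← hc x, hl, hc, hr, hc y]

theorem mul_mem {u v : L} (hu : u ∈ LCenter L) (hv : v ∈ LCenter L) : u * v ∈ LCenter L := by
  refine mem_of_comm (fun x => ?_) (fun x y => ?_) (fun x y => ?_)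
  · rw [left_assoc hu, mul_comm hv, mul_left_comm hu]
  · rw [left_assoc hu, left_assoc hu, left_assoc hv, left_assoc hu]
  · rw [← mid_assoc hu, right_assoc hu, right_assoc hv, mid_assoc hu]

theorem mem_of_mul_eq {u v k : L} (hu : u ∈ LCenter L) (hv : v ∈ LCenter L) (h : u * k = v) :
    k ∈ LCenter L := by
  have hc : ∀ x, k * x = x * k := fun x => Loop.mul_left_cancel <| by
    rw [← left_assoc hu, h, mul_comm hv, ← h, mul_left_comm hu]
  refine mem_of_comm hc (fun x y => Loop.mul_left_cancel (a := u) ?_) (fun x y => ?_)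
  · rw [← left_assoc hu, ← left_assoc hu, h, left_assoc hv, ← h, left_assoc hu]
  · have hku : k * u = v := by rw [hc, h]
    refine Loop.mul_right_cancel (a := u) ?_
    rw [right_assoc hu, hku, right_assoc hv, ← hku, ← right_assoc hu, ← right_assoc hu]

theorem mem_of_mul_mul_eq {u w x k : L} (hu : u ∈ LCenter L) (hw : w ∈ LCenter L)
    (h : u * (x * k) = w * x) : k ∈ LCenter L :=
  mem_of_mul_eq hu hw <| Loop.mul_left_cancel (a := x) <| by
    rw [mul_left_comm hu, h, mul_comm hw]

end LCenter

section Involution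
variable {L : Type u} [Loop L] {star : L → L}

theorem star_one_eq_one (hanti : ∀ a b : L, star (a * b) = star b * star a) : star (1 : L) = 1 :=
  (Loop.mul_left_cancel (a := star 1) <| by rw [← hanti, Loop.mul_one, Loop.mul_one]).symm

variable (hcen : ∀ a : L, ∃ z ∈ LCenter L, star a = z * a)
include hcen

theorem star_mem_LCenter {z : L} (hz : z ∈ LCenter L) : star z ∈ LCenter L := by
  obtain ⟨w, hw, hwz⟩ := hcen z
  exact hwz ▸ LCenter.mul_mem hw hz

theorem mem_LCenter_of_star_mem (hstar2 : ∀ a : L, star (star a) = a) {k : L}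
    (hk : star k ∈ LCenter L) : k ∈ LCenter L :=
  hstar2 k ▸ star_mem_LCenter hcen hk

theorem mem_LCenter_of_commutator (hanti : ∀ a b : L, star (a * b) = star b * star a)
    {a b k : L} (h : b * a * k = a * b) : k ∈ LCenter L := by
  obtain ⟨za, hza, ea⟩ := hcen a
  obtain ⟨zb, hzb, eb⟩ := hcen b
  obtain ⟨zab, hzab, eab⟩ := hcen (a * b)
  refine LCenter.mem_of_mul_mul_eq (x := b * a) hzab (LCenter.mul_mem hzb hza) ?_
  calc zab * (b * a * k) = star b * star a := by rw [h, ← eab, hanti]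
    _ = zb * za * (b * a) := by
      rw [ea, eb, LCenter.left_assoc hzb, LCenter.mul_left_comm hza, LCenter.left_assoc hzb]

end Involution

section CayleyDickson
variable {L : Type u} [Loop L] {star : L → L} {γ : L}

def IsCDCommutator (star : L → L) (γ : L) (x y : L × Bool) (k : L) : Prop :=
  CDmul star γ (CDmul star γ y x) (k, false) = CDmul star γ x y

theorem CDmul_snd (x y : L × Bool) : (CDmul star γ x y).2 = xor x.2 y.2 := by
  obtain ⟨a, _ | _⟩ := x <;> obtain ⟨b, _ | _⟩ := y <;> rfl

theorem exists_CDmul_mk_false_eq (hstar2 : ∀ a : L, star (star a) = a) (c d : L) (s : Bool) :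
    ∃ k, CDmul star γ (c, s) (k, false) = (d, s) := by
  cases s
  · exact ⟨Loop.ldiv c d, by simp [CDmul, Loop.mul_ldiv]⟩
  · exact ⟨star (Loop.ldiv c d), by simp [CDmul, hstar2, Loop.mul_ldiv]⟩

theorem exists_isCDCommutator (hstar2 : ∀ a : L, star (star a) = a) (x y : L × Bool) :
    ∃ k, IsCDCommutator star γ x y k := by
  obtain ⟨k, hk⟩ := exists_CDmul_mk_false_eq (γ := γ) hstar2
    (CDmul star γ y x).1 (CDmul star γ x y).1 (CDmul star γ y x).2
  refine ⟨k, ?_⟩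
  rw [IsCDCommutator, hk]
  exact Prod.ext rfl (by rw [CDmul_snd, CDmul_snd, Bool.xor_comm])

variable {a b k : L}

theorem isCDCommutator_false_false :
    IsCDCommutator star γ (a, false) (b, false) k ↔ b * a * k = a * b := by
  simp [IsCDCommutator, CDmul]

theorem isCDCommutator_false_true :
    IsCDCommutator star γ (a, false) (b, true) k ↔ b * star a * star k = b * a := by
  simp [IsCDCommutator, CDmul]

theorem isCDCommutator_true_false :
    IsCDCommutator star γ (a, true) (b, false) k ↔ a * b * star k = a * star b := by
  simp [IsCDCommutator, CDmul]

theorem isCDCommutator_true_true (hγ : γ ∈ LCenter L) :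
    IsCDCommutator star γ (a, true) (b, true) k ↔ star a * b * k = star b * a := by
  simp only [IsCDCommutator, CDmul, Prod.mk.injEq, and_true]
  rw [LCenter.left_assoc hγ]
  exact ⟨Loop.mul_left_cancel, congrArg (γ * ·)⟩

variable (hstar2 : ∀ a : L, star (star a) = a) (hanti : ∀ a b : L, star (a * b) = star b * star a)
include hstar2 hanti

theorem IsCDCommutator.false_true_eq (h : IsCDCommutator star γ (a, false) (b, true) k) :
    k * (a * star b) = star a * star b := by
  simpa only [hanti, hstar2] using congrArg star (isCDCommutator_false_true.1 h)

theorem IsCDCommutator.true_false_eq (h : IsCDCommutator star γ (a, true) (b, false) k) :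
    k * (star b * star a) = b * star a := by
  simpa only [hanti, hstar2] using congrArg star (isCDCommutator_true_false.1 h)

theorem exists_mem_LCenter_star_eq_mul
    (hM : ∀ x y k, IsCDCommutator star γ x y k → k ∈ LCenter L) (a : L) :
    ∃ z ∈ LCenter L, star a = z * a := by
  obtain ⟨k, hk⟩ := exists_isCDCommutator (γ := γ) hstar2 (a, false) (1, true)
  refine ⟨k, hM _ _ k hk, ?_⟩
  simpa only [star_one_eq_one hanti, Loop.mul_one] using (hk.false_true_eq hstar2 hanti).symm

theorem IsCDCommutator.mem_LCenter (hγ : γ ∈ LCenter L)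
    (hcen : ∀ a : L, ∃ z ∈ LCenter L, star a = z * a) {x y : L × Bool}
    (h : IsCDCommutator star γ x y k) : k ∈ LCenter L := by
  obtain ⟨a, _ | _⟩ := x <;> obtain ⟨b, _ | _⟩ := y
  · exact mem_LCenter_of_commutator hcen hanti (isCDCommutator_false_false.1 h)
  · obtain ⟨za, hza, ea⟩ := hcen a
    have hk : k * (a * star b) = za * (a * star b) := by
      rw [h.false_true_eq hstar2 hanti, ea, LCenter.left_assoc hza]
    exact Loop.mul_right_cancel hk ▸ hza
  · obtain ⟨zb, hzb, eb⟩ := hcen b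
    have hk : a * b * star k = a * b * zb := by
      rw [isCDCommutator_true_false.1 h, eb, LCenter.mul_left_comm hzb, LCenter.mul_comm hzb]
    exact mem_LCenter_of_star_mem hcen hstar2 (Loop.mul_left_cancel hk ▸ hzb)
  · obtain ⟨za, hza, ea⟩ := hcen a
    obtain ⟨zb, hzb, eb⟩ := hcen b
    obtain ⟨c, hc⟩ : ∃ c, b * a * c = a * b := ⟨_, Loop.mul_ldiv _ _⟩
    have hcc : c ∈ LCenter L := mem_LCenter_of_commutator hcen hanti hc
    have hck : za * (b * a * (c * k)) = zb * (b * a) := by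
      rw [← LCenter.mid_assoc hcc, hc, ← LCenter.left_assoc hza, ← LCenter.left_assoc hza, ← ea,
        (isCDCommutator_true_true hγ).1 h, eb, LCenter.left_assoc hzb]
    exact LCenter.mem_of_mul_eq hcc (LCenter.mem_of_mul_mul_eq hza hzb hck) rfl

end CayleyDickson

/-- Commutators of `M = D(L,*,γ)` lie in `L` and satisfy the explicit
formulas `[a,bj]·(ab^*) = a^*b^*`, `[aj,b]·(b^*a^*) = ba^*`,
`b^*a = (a^*b)·[aj,bj]`; consequently all commutators of `M` are central in
`L` iff `*` is a central involution on `L`. -/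
theorem stmt16 {L : Type u} [Loop L] (star : L → L)
    (hstar2 : ∀ a : L, star (star a) = a)
    (hanti : ∀ a b : L, star (a * b) = star b * star a)
    (γ : L) (hγ : γ ∈ LCenter L) :
    (∀ x y : L × Bool, ∃ k : L,
        CDmul star γ (CDmul star γ y x) (k, false) = CDmul star γ x y) ∧
    (∀ a b k : L,
        CDmul star γ (CDmul star γ (b, true) (a, false)) (k, false)
          = CDmul star γ (a, false) (b, true) →
        k * (a * star b) = star a * star b) ∧
    (∀ a b k : L,
        CDmul star γ (CDmul star γ (b, false) (a, true)) (k, false)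
          = CDmul star γ (a, true) (b, false) →
        k * (star b * star a) = b * star a) ∧
    (∀ a b k : L,
        CDmul star γ (CDmul star γ (b, true) (a, true)) (k, false)
          = CDmul star γ (a, true) (b, true) →
        star b * a = (star a * b) * k) ∧
    ((∀ (x y : L × Bool) (k : L),
        CDmul star γ (CDmul star γ y x) (k, false) = CDmul star γ x y →
        k ∈ LCenter L) ↔
      (∀ a : L, ∃ z ∈ LCenter L, star a = z * a)) :=
  ⟨exists_isCDCommutator hstar2,
    fun _ _ _ h => IsCDCommutator.false_true_eq hstar2 hanti h,
    fun _ _ _ h => IsCDCommutator.true_false_eq hstar2 hanti h,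
    fun _ _ _ h => ((isCDCommutator_true_true hγ).1 h).symm,
    ⟨exists_mem_LCenter_star_eq_mul hstar2 hanti,
      fun hcen _ _ _ h => IsCDCommutator.mem_LCenter hstar2 hanti hγ hcen h⟩⟩
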